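/- With S_N the span of products of N tridiagonal Toeplitz matrices in R^{d×d}: if n + m = d + 1, then E_{n,m} ∈ S_{d-1}. -/
import Mathlib


/-- `E_{n,m}` (1-based positions): 1 in position `(n, m)`, zeros elsewhere. -/
def matUnit (d : ℕ) (n m : ℤ) : Matrix (Fin d) (Fin d) ℝ :=
  Matrix.of fun i j => if (i : ℤ) + 1 = n ∧ (j : ℤ) + 1 = m then 1 else 0

/-- `To_d(1)`: tridiagonal Toeplitz matrices, `x_{ij} = w_{j-i}` for `|i-j| ≤ 1`, else `0`. -/
def Tod1 (d : ℕ) : Set (Matrix (Fin d) (Fin d) ℝ) :=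
  {A | ∃ w : ℤ → ℝ, ∀ i j : Fin d,
    A i j = if |(i : ℤ) - (j : ℤ)| ≤ 1 then w ((j : ℤ) - (i : ℤ)) else 0}

/-- `S_N`: finite sums of (ordered) products of `N` tridiagonal Toeplitz matrices. -/
def SN (d N : ℕ) : Set (Matrix (Fin d) (Fin d) ℝ) :=
  {A | ∃ n : ℕ, ∃ T : Fin n → Fin N → Matrix (Fin d) (Fin d) ℝ,
    (∀ i j, T i j ∈ Tod1 d) ∧ A = ∑ i, (List.ofFn (T i)).prod}

namespace MU
open Matrix

def Lm (d : ℕ) : Matrix (Fin d) (Fin d) ℝ :=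
  Matrix.of fun i j => if (i : ℤ) = (j : ℤ) + 1 then 1 else 0

def Um (d : ℕ) : Matrix (Fin d) (Fin d) ℝ :=
  Matrix.of fun i j => if (j : ℤ) = (i : ℤ) + 1 then 1 else 0

lemma Lm_pow (d a : ℕ) : (Lm d) ^ a =
    Matrix.of fun (i j : Fin d) => if (i : ℤ) = (j : ℤ) + a then (1:ℝ) else 0 := by
  induction a with
  | zero =>
    ext i j
    simp only [pow_zero, Matrix.one_apply, Matrix.of_apply, Nat.cast_zero, add_zero]
    have : i = j ↔ (i : ℤ) = (j : ℤ) := by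
      rw [Fin.ext_iff]; exact_mod_cast Iff.rfl
    split_ifs with h1 h2 h2 <;> first | rfl | (exfalso; rw [this] at h1; omega)
  | succ a ih =>
    rw [pow_succ, ih]
    ext i j
    rw [Matrix.mul_apply]
    simp only [Matrix.of_apply, Lm]
    have hi := i.isLt; have hj := j.isLt
    by_cases hex : j.val + 1 < d
    · rw [Finset.sum_eq_single (⟨j.val + 1, hex⟩ : Fin d)]
      · simp only [Fin.val_mk]
        split_ifs <;> first | rfl | (exfalso; omega) | norm_num
      · intro k _ hk
        have hkk : (k : ℤ) ≠ (j : ℤ) + 1 := by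
          intro h; apply hk; apply Fin.ext; simp only [Fin.val_mk]; omega
        split_ifs <;> first | rfl | (exfalso; omega) | norm_num
      · intro h; exact absurd (Finset.mem_univ _) h
    · rw [Finset.sum_eq_zero, if_neg (by push_cast; omega)]
      intro k _
      have hk := k.isLt
      split_ifs <;> first | rfl | (exfalso; omega) | norm_num

lemma Um_pow (d b : ℕ) : (Um d) ^ b =
    Matrix.of fun (i j : Fin d) => if (j : ℤ) = (i : ℤ) + b then (1:ℝ) else 0 := by
  have hT : Um d = (Lm d)ᵀ := by ext i j; rfl
  rw [hT, ← Matrix.transpose_pow, Lm_pow]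
  ext i j; rfl

lemma LU (d a b : ℕ) : (Lm d) ^ a * (Um d) ^ b =
    Matrix.of fun (i j : Fin d) =>
      if (i : ℤ) - a = (j : ℤ) - b ∧ (a : ℤ) ≤ (i : ℤ) then (1:ℝ) else 0 := by
  rw [Lm_pow, Um_pow]
  ext i j
  rw [Matrix.mul_apply]
  simp only [Matrix.of_apply]
  have hi := i.isLt; have hj := j.isLt
  by_cases hex : a ≤ i.val
  · have hlt : i.val - a < d := by omega
    rw [Finset.sum_eq_single (⟨i.val - a, hlt⟩ : Fin d)]
    · simp only [Fin.val_mk]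
      split_ifs <;> first | rfl | (exfalso; omega) | norm_num
    · intro k _ hk
      have hkk : (k : ℤ) ≠ (i : ℤ) - a := by
        intro h; apply hk; apply Fin.ext; simp only [Fin.val_mk]; omega
      split_ifs <;> first | rfl | (exfalso; omega) | norm_num
    · intro h; exact absurd (Finset.mem_univ _) h
  · rw [Finset.sum_eq_zero, if_neg (by push_cast; omega)]
    intro k _
    have hk := k.isLt
    split_ifs <;> first | rfl | (exfalso; omega) | norm_num

lemma UL (d a b : ℕ) : (Um d) ^ b * (Lm d) ^ a =
    Matrix.of fun (i j : Fin d) =>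
      if (i : ℤ) + b = (j : ℤ) + a ∧ (i : ℤ) + b ≤ (d : ℤ) - 1 then (1:ℝ) else 0 := by
  rw [Lm_pow, Um_pow]
  ext i j
  rw [Matrix.mul_apply]
  simp only [Matrix.of_apply]
  have hi := i.isLt; have hj := j.isLt
  by_cases hex : i.val + b < d
  · rw [Finset.sum_eq_single (⟨i.val + b, hex⟩ : Fin d)]
    · simp only [Fin.val_mk]
      split_ifs <;> first | rfl | (exfalso; omega) | norm_num
    · intro k _ hk
      have hkk : (k : ℤ) ≠ (i : ℤ) + b := by
        intro h; apply hk; apply Fin.ext; simp only [Fin.val_mk]; omega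
      split_ifs <;> first | rfl | (exfalso; omega) | norm_num
    · intro h; exact absurd (Finset.mem_univ _) h
  · rw [Finset.sum_eq_zero, if_neg (by push_cast; omega)]
    intro k _
    have hk := k.isLt
    split_ifs <;> first | rfl | (exfalso; omega) | norm_num


lemma prod_ofFn_ite {M : Type*} [Monoid M] (x y : M) :
    ∀ (N a : ℕ), a ≤ N →
      (List.ofFn fun j : Fin N => if (j : ℕ) < a then x else y).prod = x ^ a * y ^ (N - a) := by
  intro N
  induction N with
  | zero =>
    intro a ha
    interval_cases a
    simp
  | succ N ih =>
    intro a ha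
    rw [List.ofFn_succ, List.prod_cons]
    cases a with
    | zero =>
      simp only [Nat.not_lt_zero, if_false, pow_zero, one_mul]
      have := ih 0 (Nat.zero_le N)
      simp only [Nat.not_lt_zero, if_false, pow_zero, one_mul] at this
      rw [this, Nat.sub_zero, Nat.sub_zero, ← pow_succ']
    | succ a =>
      have h0 : ((0 : Fin (N+1)) : ℕ) < a + 1 := Nat.succ_pos a
      rw [if_pos h0]
      rw [show (fun j : Fin N => if ((j.succ : Fin (N+1)) : ℕ) < a + 1 then x else y) =
          (fun j : Fin N => if (j : ℕ) < a then x else y) by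
        funext j; simp [Fin.val_succ, Nat.succ_lt_succ_iff]]
      rw [ih a (by omega), ← mul_assoc, ← pow_succ', Nat.succ_sub_succ]

lemma prod_ofFn_negHead {R : Type*} [Ring R] {N : ℕ} (hN : N ≠ 0) (f : Fin N → R) :
    (List.ofFn fun j => if (j : ℕ) = 0 then -f j else f j).prod = -(List.ofFn f).prod := by
  cases N with
  | zero => exact absurd rfl hN
  | succ N =>
    rw [List.ofFn_succ, List.ofFn_succ, List.prod_cons, List.prod_cons]
    have h1 : (fun j : Fin N => if ((j.succ : Fin (N+1)) : ℕ) = 0 then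
        -f j.succ else f j.succ) = fun j : Fin N => f j.succ := by
      funext j; simp [Fin.val_succ]
    simp [h1, neg_mul]


variable {d : ℕ}

lemma Lm_mem : Lm d ∈ Tod1 d := by
  refine ⟨fun z => if z = -1 then 1 else 0, fun i j => ?_⟩
  simp only [Lm, Matrix.of_apply, abs_le]
  split_ifs <;> first | rfl | (exfalso; omega)

lemma Um_mem : Um d ∈ Tod1 d := by
  refine ⟨fun z => if z = 1 then 1 else 0, fun i j => ?_⟩
  simp only [Um, Matrix.of_apply, abs_le]
  split_ifs <;> first | rfl | (exfalso; omega)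

lemma one_mem : (1 : Matrix (Fin d) (Fin d) ℝ) ∈ Tod1 d := by
  refine ⟨fun z => if z = 0 then 1 else 0, fun i j => ?_⟩
  simp only [Matrix.one_apply, abs_le]
  have : i = j ↔ (i : ℤ) = (j : ℤ) := by rw [Fin.ext_iff]; exact_mod_cast Iff.rfl
  split_ifs with h1 <;> first | rfl | (exfalso; rw [this] at h1; omega) |
    (exfalso; rw [this] at *; omega)

lemma neg_mem {A : Matrix (Fin d) (Fin d) ℝ} (hA : A ∈ Tod1 d) : -A ∈ Tod1 d := by
  obtain ⟨w, hw⟩ := hA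
  refine ⟨fun z => -(w z), fun i j => ?_⟩
  simp only [Matrix.neg_apply, hw i j]
  split_ifs <;> simp

end MU

open MU

/-- If `1 ≤ n, m` and `n + m = d + 1`, then `E_{n,m} ∈ S_{d-1}`. -/
theorem matUnit_mem_SN_of_add_eq_succ (d n m : ℕ) (hn : 1 ≤ n) (hm : 1 ≤ m)
    (hnm : n + m = d + 1) : matUnit d n m ∈ SN d (d - 1) := by
  rcases Nat.lt_or_ge d 2 with hd2 | hd2
  · have hd1 : d = 1 := by omega
    have hn1 : n = 1 := by omega
    have hm1 : m = 1 := by omega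
    subst hd1 hn1 hm1
    refine ⟨1, fun _ _ => 0, fun i j => j.elim0, ?_⟩
    ext i j
    fin_cases i; fin_cases j
    simp [matUnit, List.ofFn_zero, Matrix.one_apply]
  · have hN : d - 1 ≠ 0 := by omega
    rcases le_or_gt m n with hmn | hmn
    · -- n ≥ m : third summand is -(Lm d)^(n-m)
      refine ⟨3, ![
        (fun j : Fin (d-1) => if (j : ℕ) < n - 1 then Lm d else Um d),
        (fun j : Fin (d-1) => if (j : ℕ) < m - 1 then Um d else Lm d),
        (fun j : Fin (d-1) => if (j : ℕ) = 0 then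
            -(if (j : ℕ) < (d-1) - (n-m) then 1 else Lm d)
          else (if (j : ℕ) < (d-1) - (n-m) then 1 else Lm d))], ?_, ?_⟩
      · intro i j
        fin_cases i <;>
          simp only [Fin.zero_eta, Fin.mk_one, show (⟨2, by omega⟩ : Fin 3) = 2 from rfl,
            Fin.isValue, Matrix.cons_val_zero, Matrix.cons_val_one, Matrix.head_cons,
            Matrix.cons_val_two, Matrix.tail_cons] <;>
          split_ifs <;>
          first | exact Lm_mem | exact Um_mem | exact one_mem | exact neg_mem one_mem | exact neg_mem Lm_mem
      · rw [Fin.sum_univ_three]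
        simp only [Matrix.cons_val_zero, Matrix.cons_val_one, Matrix.head_cons,
          Matrix.cons_val_two, Matrix.tail_cons]
        rw [prod_ofFn_ite (Lm d) (Um d) (d-1) (n-1) (by omega),
            prod_ofFn_ite (Um d) (Lm d) (d-1) (m-1) (by omega),
            prod_ofFn_negHead hN, prod_ofFn_ite (1) (Lm d) (d-1) ((d-1)-(n-m)) (by omega),
            one_pow, one_mul]
        have e1 : d - 1 - (n - 1) = m - 1 := by omega
        have e2 : d - 1 - (m - 1) = n - 1 := by omega
        have e3 : d - 1 - (d - 1 - (n - m)) = n - m := by omega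
        rw [e1, e2, e3, LU, UL, Lm_pow]
        ext i j
        have hi := i.isLt; have hj := j.isLt
        simp only [matUnit, Matrix.add_apply, Matrix.neg_apply, Matrix.of_apply]
        split_ifs <;> first | (exfalso; omega) | norm_num
    · -- m > n : third summand is -(Um d)^(m-n)
      refine ⟨3, ![
        (fun j : Fin (d-1) => if (j : ℕ) < n - 1 then Lm d else Um d),
        (fun j : Fin (d-1) => if (j : ℕ) < m - 1 then Um d else Lm d),
        (fun j : Fin (d-1) => if (j : ℕ) = 0 then
            -(if (j : ℕ) < (d-1) - (m-n) then 1 else Um d)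
          else (if (j : ℕ) < (d-1) - (m-n) then 1 else Um d))], ?_, ?_⟩
      · intro i j
        fin_cases i <;>
          simp only [Fin.zero_eta, Fin.mk_one, show (⟨2, by omega⟩ : Fin 3) = 2 from rfl,
            Fin.isValue, Matrix.cons_val_zero, Matrix.cons_val_one, Matrix.head_cons,
            Matrix.cons_val_two, Matrix.tail_cons] <;>
          split_ifs <;>
          first | exact Lm_mem | exact Um_mem | exact one_mem | exact neg_mem one_mem | exact neg_mem Um_mem
      · rw [Fin.sum_univ_three]
        simp only [Matrix.cons_val_zero, Matrix.cons_val_one, Matrix.head_cons,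
          Matrix.cons_val_two, Matrix.tail_cons]
        rw [prod_ofFn_ite (Lm d) (Um d) (d-1) (n-1) (by omega),
            prod_ofFn_ite (Um d) (Lm d) (d-1) (m-1) (by omega),
            prod_ofFn_negHead hN, prod_ofFn_ite (1) (Um d) (d-1) ((d-1)-(m-n)) (by omega),
            one_pow, one_mul]
        have e1 : d - 1 - (n - 1) = m - 1 := by omega
        have e2 : d - 1 - (m - 1) = n - 1 := by omega
        have e3 : d - 1 - (d - 1 - (m - n)) = m - n := by omega
        rw [e1, e2, e3, LU, UL, Um_pow]
        ext i j
        have hi := i.isLt; have hj := j.isLt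
        simp only [matUnit, Matrix.add_apply, Matrix.neg_apply, Matrix.of_apply]
        split_ifs <;> first | (exfalso; omega) | norm_num
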